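/- arXiv:2306.15021 — 8 statements merged into one kernel-verified Lean document; each statement's English description precedes it below -/
import Mathlib

section
/- Let H be a complex Hilbert space and let R = (R_1,…,R_d) be a commuting d-tuple of bounded linear operators on H. Then for all m, n ∈ ℕ₀ the two defining expressions for Λ_{m,n}(R) agree: Σ_{k=0}^{n} (−1)^{n−k} C(n,k) (R_1*+⋯+R_d*)^k M_m(R) (R_1+⋯+R_d)^{n−k} = Σ_{j=0}^{m} (−1)^{m−j} C(m,j) Σ_{|γ|=j} (j!/γ!) R*^γ S_n(R) R^γ. -/
open Finset ContinuousLinearMap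
open scoped InnerProductSpace

variable {H : Type*} [NormedAddCommGroup H] [InnerProductSpace ℂ H] [CompleteSpace H]

/-- `R^γ = R_1^{γ_1} ⋯ R_d^{γ_d}` for a multi-index `γ`. -/
noncomputable def opPow {d : ℕ} (R : Fin d → H →L[ℂ] H) (γ : Fin d → ℕ) : H →L[ℂ] H :=
  (List.ofFn fun i => (R i) ^ (γ i)).prod

/-- `M_m(R) = Σ_{k=0}^{m} (−1)^{m−k} C(m,k) Σ_{|γ|=k} (k!/γ!) R*^γ R^γ`. -/
noncomputable def Mop {d : ℕ} (R : Fin d → H →L[ℂ] H) (m : ℕ) : H →L[ℂ] H :=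
  ∑ k ∈ Finset.range (m + 1), ((-1 : ℂ) ^ (m - k) * (m.choose k : ℂ)) •
    ∑ γ ∈ Finset.Nat.antidiagonalTuple d k,
      ((Nat.multinomial Finset.univ γ : ℕ) : ℂ) •
        (opPow (fun i => ContinuousLinearMap.adjoint (R i)) γ * opPow R γ)

/-- `S_n(R) = Σ_{k=0}^{n} (−1)^{n−k} C(n,k) (R_1*+⋯+R_d*)^k (R_1+⋯+R_d)^{n−k}`. -/
noncomputable def Sop {d : ℕ} (R : Fin d → H →L[ℂ] H) (n : ℕ) : H →L[ℂ] H :=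
  ∑ k ∈ Finset.range (n + 1), ((-1 : ℂ) ^ (n - k) * (n.choose k : ℂ)) •
    ((∑ i, ContinuousLinearMap.adjoint (R i)) ^ k * (∑ i, R i) ^ (n - k))

/-- `Λ_{m,n}(R) = Σ_{k=0}^{n} (−1)^{n−k} C(n,k) (R_1*+⋯+R_d*)^k M_m(R) (R_1+⋯+R_d)^{n−k}`. -/
noncomputable def Lam {d : ℕ} (R : Fin d → H →L[ℂ] H) (m n : ℕ) : H →L[ℂ] H :=
  ∑ k ∈ Finset.range (n + 1), ((-1 : ℂ) ^ (n - k) * (n.choose k : ℂ)) •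
    ((∑ i, ContinuousLinearMap.adjoint (R i)) ^ k * Mop R m * (∑ i, R i) ^ (n - k))

/-! Both sides expand to the same double sum over `k` and `γ`: the term `R*^γ R^γ` of `M_m(R)`
can be pulled out of `(∑ R_i*)^k (R*^γ R^γ) (∑ R_i)^{n-k}` to give `R*^γ ((∑ R_i*)^k (∑ R_i)^{n-k}) R^γ`,
because `R*^γ` commutes with `∑ R_i*` and `R^γ` with `∑ R_i`. -/

lemma mul_mul_mul_eq_of_commute {M : Type*} [Semigroup M] {x a b y : M}
    (hxa : Commute x a) (hby : Commute b y) : x * (a * b) * y = a * (x * y) * b := by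
  rw [← mul_assoc, hxa.eq, mul_assoc a, mul_assoc, mul_assoc, hby.eq, ← mul_assoc x, ← mul_assoc]

lemma commute_prod_ofFn_pow_sum {A : Type*} [Semiring A] {d : ℕ} {f : Fin d → A}
    (hf : ∀ i j, Commute (f i) (f j)) (γ : Fin d → ℕ) :
    Commute (List.ofFn fun i => f i ^ γ i).prod (∑ i, f i) :=
  Commute.list_prod_left _ _ fun _ ha => by
    obtain ⟨i, rfl⟩ := List.mem_ofFn.mp ha
    exact (Commute.sum_right _ _ _ fun j _ => hf i j).pow_left _

lemma commute_sum_pow_opPow {E : Type*} [NormedAddCommGroup E] [InnerProductSpace ℂ E] {d : ℕ}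
    {R : Fin d → E →L[ℂ] E} (hR : ∀ i j, Commute (R i) (R j)) (γ : Fin d → ℕ) (p : ℕ) :
    Commute ((∑ i, R i) ^ p) (opPow R γ) :=
  ((commute_prod_ofFn_pow_sum hR γ).pow_right p).symm

lemma commute_adjoint_of_commute {d : ℕ} {R : Fin d → H →L[ℂ] H}
    (hR : ∀ i j, Commute (R i) (R j)) (i j : Fin d) :
    Commute (adjoint (R i)) (adjoint (R j)) := by
  simpa only [← star_eq_adjoint] using (hR i j).star_star

/-- the two defining expressions for `Λ_{m,n}(R)` agree. -/
theorem lam_eq_second_form {d : ℕ} (R : Fin d → H →L[ℂ] H)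
    (hcomm : ∀ i j, Commute (R i) (R j)) (m n : ℕ) :
    Lam R m n =
      ∑ j ∈ Finset.range (m + 1), ((-1 : ℂ) ^ (m - j) * (m.choose j : ℂ)) •
        ∑ γ ∈ Finset.Nat.antidiagonalTuple d j,
          ((Nat.multinomial Finset.univ γ : ℕ) : ℂ) •
            (opPow (fun i => ContinuousLinearMap.adjoint (R i)) γ * Sop R n * opPow R γ) := by
  unfold Lam Mop Sop
  simp only [Finset.mul_sum, Finset.sum_mul, Finset.smul_sum, smul_mul_assoc, mul_smul_comm]
  rw [Finset.sum_comm]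
  refine Finset.sum_congr rfl fun j _ => ?_
  rw [Finset.sum_comm]
  refine Finset.sum_congr rfl fun γ _ => Finset.sum_congr rfl fun k _ => ?_
  rw [smul_comm, smul_comm ((-1 : ℂ) ^ (n - k) * _),
    mul_mul_mul_eq_of_commute (commute_sum_pow_opPow (commute_adjoint_of_commute hcomm) γ k)
      (commute_sum_pow_opPow hcomm γ (n - k)).symm]
end

section
/- Let H be a complex Hilbert space, let R ∈ B(H) be a single operator that is (m,n)-isosymmetric, i.e. Σ_{k=0}^{n} (−1)^{n−k} C(n,k) (R*)^k ( Σ_{j=0}^{m} (−1)^{m−j} C(m,j) (R*)^j R^j ) R^{n−k} = 0, and let β = (β_1,…,β_d) ∈ ℝ^d with β_1² + ⋯ + β_d² = 1. Then the commuting d-tuple (β_1 R, β_2 R, …, β_d R) is an (m,n)-isosymmetric multioperator, i.e. Λ_{m,n}(β_1 R,…,β_d R) = 0. -/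
open Finset ContinuousLinearMap
open scoped InnerProductSpace

variable {H : Type*} [NormedAddCommGroup H] [InnerProductSpace ℂ H] [CompleteSpace H]

/-!
Scaling every entry of the tuple by a real `β_i` multiplies `R*^γ R^γ` by `∏ β_i^{2γ_i}`, so by the
multinomial theorem the inner sum `Σ_{|γ|=k} (k!/γ!) R*^γ R^γ` collapses to `(Σ β_i²)^k R*^k R^k = R*^k R^k`:
`M_m` of the tuple is `M_m(R)`. The outer sums become `s R*` and `s R` with `s = Σ β_i` real, so
`Λ_{m,n}` of the tuple is `s^n` times the single-operator `Λ_{m,n}(R) = 0`.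
-/

theorem Finset.Nat.sum_antidiagonalTuple_multinomial_mul_prod_pow {S : Type*} [CommSemiring S]
    {d : ℕ} (x : Fin d → S) (k : ℕ) :
    ∑ γ ∈ Finset.Nat.antidiagonalTuple d k, (Nat.multinomial univ γ : S) * ∏ i, x i ^ γ i =
      (∑ i, x i) ^ k := by
  rw [← Finset.piAntidiag_univ_fin_eq_antidiagonalTuple, Finset.sum_pow_eq_sum_piAntidiag]

omit [CompleteSpace H] in
theorem opPow_smul_const {d : ℕ} (c : Fin d → ℂ) (T : H →L[ℂ] H) (γ : Fin d → ℕ) :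
    opPow (fun i => c i • T) γ = (∏ i, c i ^ γ i) • T ^ (∑ i, γ i) := by
  induction d with
  | zero => simp [opPow]
  | succ d ih =>
    rw [opPow, List.ofFn_succ, List.prod_cons, Fin.prod_univ_succ, Fin.sum_univ_succ]
    have htail := ih (c ∘ Fin.succ) (γ ∘ Fin.succ)
    rw [opPow] at htail
    simp only [Function.comp_apply] at htail
    rw [htail, smul_pow, smul_mul_smul_comm, ← pow_add]

theorem Mop_smul_const {d : ℕ} (c : Fin d → ℂ) (T : H →L[ℂ] H) (m : ℕ) :
    Mop (fun i => c i • T) m =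
      ∑ k ∈ range (m + 1), ((-1 : ℂ) ^ (m - k) * (m.choose k : ℂ)) •
        ((∑ i, star (c i) * c i) ^ k • (adjoint T ^ k * T ^ k)) := by
  refine sum_congr rfl fun k _ => congrArg _ ?_
  have hadj : (fun i => adjoint (c i • T)) = fun i => star (c i) • adjoint T := by
    funext i
    exact map_smulₛₗ adjoint (c i) T
  rw [hadj, ← Finset.Nat.sum_antidiagonalTuple_multinomial_mul_prod_pow, sum_smul]
  refine sum_congr rfl fun γ hγ => ?_
  rw [Finset.Nat.mem_antidiagonalTuple] at hγ
  rw [opPow_smul_const, opPow_smul_const, hγ, smul_mul_smul_comm, ← prod_mul_distrib, smul_smul]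
  simp only [mul_pow]

theorem sum_smul_smul_pow_mul_mul_smul_pow {𝕜 A : Type*} [CommSemiring 𝕜] [Semiring A]
    [Algebra 𝕜 A] (a : ℕ → 𝕜) (s : 𝕜) (X M Y : A) (n : ℕ) :
    ∑ k ∈ range (n + 1), a k • ((s • X) ^ k * M * (s • Y) ^ (n - k)) =
      s ^ n • ∑ k ∈ range (n + 1), a k • (X ^ k * M * Y ^ (n - k)) := by
  rw [smul_sum]
  refine sum_congr rfl fun k hk => ?_
  have hkn : k ≤ n := Nat.lt_succ_iff.mp (mem_range.mp hk)
  rw [smul_pow, smul_pow, smul_mul_assoc, smul_mul_smul_comm, ← pow_add, Nat.add_sub_cancel' hkn,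
    smul_comm]

/-- if `R` is an `(m,n)`-isosymmetric single operator and `β ∈ ℝ^d` is a unit vector,
then the tuple `(β_1 R, …, β_d R)` is an `(m,n)`-isosymmetric multioperator. -/
theorem isosymmetric_tuple_of_single {d : ℕ} (R : H →L[ℂ] H) (m n : ℕ)
    (hR : ∑ k ∈ Finset.range (n + 1), ((-1 : ℂ) ^ (n - k) * (n.choose k : ℂ)) •
        ((ContinuousLinearMap.adjoint R) ^ k *
          (∑ j ∈ Finset.range (m + 1), ((-1 : ℂ) ^ (m - j) * (m.choose j : ℂ)) •
            ((ContinuousLinearMap.adjoint R) ^ j * R ^ j)) * R ^ (n - k)) = 0)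
    (β : Fin d → ℝ) (hβ : ∑ i, (β i) ^ 2 = 1) :
    Lam (fun i => (β i : ℂ) • R) m n = 0 := by
  have hnorm : ∑ i, star (β i : ℂ) * β i = 1 := by
    simp only [Complex.star_def, Complex.conj_ofReal, ← sq]
    exact_mod_cast hβ
  have hsum : ∑ i, (β i : ℂ) • R = (∑ i, (β i : ℂ)) • R := (sum_smul ..).symm
  have hsum_adj : ∑ i, adjoint ((β i : ℂ) • R) = (∑ i, (β i : ℂ)) • adjoint R := by
    rw [sum_smul]
    refine sum_congr rfl fun i _ => ?_
    rw [map_smulₛₗ, Complex.conj_ofReal]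
  rw [Lam, Mop_smul_const, hnorm, hsum, hsum_adj, sum_smul_smul_pow_mul_mul_smul_pow]
  simp only [one_pow, one_smul]
  rw [hR, smul_zero]
end

section
/- Let H be a complex Hilbert space and let R = (R_1,…,R_d) be a commuting d-tuple of bounded linear operators on H. Then for all m, n ∈ ℕ₀: Λ_{m+1,n}(R) = Σ_{j=1}^{d} R_j* Λ_{m,n}(R) R_j − Λ_{m,n}(R). -/
open Finset ContinuousLinearMap
open scoped InnerProductSpace

variable {H : Type*} [NormedAddCommGroup H] [InnerProductSpace ℂ H] [CompleteSpace H]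

/-! Write `β X = Σ_j R_j* X R_j`. For commuting `R_j`, the multinomial theorem gives
`β^k I = Σ_{|γ|=k} (k!/γ!) R*^γ R^γ`, so `M_m(R) = (β - 1)^m I` and `M_{m+1} = β M_m - M_m`;
formally, `β` is multiplication by `t_1 + ⋯ + t_d` transported along `t^γ ↦ R*^γ R^γ`.
Since `A = Σ R_j*` commutes with every `R_j*` and `B = Σ R_j` with every `R_j`, `β` commutes
with each `X ↦ A^k X B^l`, hence with `M_m ↦ Λ_{m,n}`. -/

theorem mul_sum_mul_mul_sub_mul_of_commute {E ι : Type*} [Ring E] (s : Finset ι)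
    {A B : ι → E} {P Q : E} (hP : ∀ j, Commute P (A j)) (hQ : ∀ j, Commute Q (B j))
    (X : E) :
    P * (∑ j ∈ s, A j * X * B j - X) * Q =
      ∑ j ∈ s, A j * (P * X * Q) * B j - P * X * Q := by
  rw [mul_sub, sub_mul, Finset.mul_sum, Finset.sum_mul]
  congr 1
  refine Finset.sum_congr rfl fun j _ => ?_
  calc P * (A j * X * B j) * Q = P * A j * X * (B j * Q) := by simp only [mul_assoc]
    _ = A j * P * X * (Q * B j) := by rw [(hP j).eq, (hQ j).eq]
    _ = A j * (P * X * Q) * B j := by simp only [mul_assoc]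

section opPow

omit [CompleteSpace H]

variable {d : ℕ}

theorem opPow_zero (S : Fin d → H →L[ℂ] H) : opPow S 0 = 1 := by
  simp [opPow]

theorem opPow_fin_succ (S : Fin (d + 1) → H →L[ℂ] H) (γ : Fin (d + 1) → ℕ) :
    opPow S γ = S 0 ^ γ 0 * opPow (fun i => S i.succ) (fun i => γ i.succ) := by
  simp [opPow, List.ofFn_succ]

theorem Commute.opPow_right {S : Fin d → H →L[ℂ] H} {T : H →L[ℂ] H}
    (h : ∀ i, Commute T (S i)) (γ : Fin d → ℕ) : Commute T (opPow S γ) :=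
  Commute.list_prod_right _ _ fun _ hy => by
    obtain ⟨i, rfl⟩ := List.mem_ofFn.mp hy
    exact (h i).pow_right _

theorem opPow_add {S : Fin d → H →L[ℂ] H} (hS : ∀ i j, Commute (S i) (S j))
    (γ δ : Fin d → ℕ) : opPow S (γ + δ) = opPow S γ * opPow S δ := by
  induction d with
  | zero => simp [opPow]
  | succ d ih =>
    have hc : Commute (opPow (fun i => S i.succ) (fun i => γ i.succ)) (S 0 ^ δ 0) :=
      ((Commute.opPow_right (fun i => hS 0 i.succ) _).pow_left _).symm
    rw [opPow_fin_succ, opPow_fin_succ S γ, opPow_fin_succ S δ, Pi.add_apply, pow_add,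
      hc.mul_mul_mul_comm, ← ih (fun i j => hS i.succ j.succ)]
    rfl

theorem opPow_single (S : Fin d → H →L[ℂ] H) (j : Fin d) :
    opPow S (Pi.single j 1) = S j := by
  induction d with
  | zero => exact j.elim0
  | succ d ih =>
    rw [opPow_fin_succ]
    cases j using Fin.cases with
    | zero =>
      have : (fun i : Fin d => (Pi.single 0 1 : Fin (d + 1) → ℕ) i.succ) = 0 := by
        funext i
        simp [Fin.succ_ne_zero]
      rw [this, opPow_zero, Pi.single_eq_same, pow_one, mul_one]
    | succ j =>
      have : (fun i : Fin d => (Pi.single j.succ 1 : Fin (d + 1) → ℕ) i.succ) =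
          Pi.single j 1 := by
        funext i
        simp [Pi.single_apply]
      rw [this, ih, Pi.single_eq_of_ne (Fin.succ_ne_zero j).symm, pow_zero, one_mul]

end opPow

section HereditaryCalculus

variable {d : ℕ}

open MvPolynomial

/-- The hereditary functional calculus, restricted to polynomials in `t_j = z̄_j z_j`. -/
noncomputable def hereditaryCalc (R : Fin d → H →L[ℂ] H) :
    MvPolynomial (Fin d) ℂ →ₗ[ℂ] (H →L[ℂ] H) :=
  (basisMonomials (Fin d) ℂ).constr ℂ fun γ =>
    opPow (fun i => adjoint (R i)) γ * opPow R γ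

theorem hereditaryCalc_monomial (R : Fin d → H →L[ℂ] H) (γ : Fin d →₀ ℕ) (c : ℂ) :
    hereditaryCalc R (monomial γ c) = c • (opPow (fun i => adjoint (R i)) γ * opPow R γ) := by
  rw [show monomial γ c = c • basisMonomials (Fin d) ℂ γ by simp [smul_monomial], map_smul,
    hereditaryCalc, Module.Basis.constr_basis]

theorem hereditaryCalc_X_mul {R : Fin d → H →L[ℂ] H} (hR : ∀ i j, Commute (R i) (R j))
    (j : Fin d) (p : MvPolynomial (Fin d) ℂ) :
    hereditaryCalc R (X j * p) = adjoint (R j) * hereditaryCalc R p * R j := by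
  induction p using MvPolynomial.induction_on' with
  | monomial γ c =>
    have hγ : ⇑(Finsupp.single j 1 + γ : Fin d →₀ ℕ) =
        (Pi.single j 1 + ⇑γ : Fin d → ℕ) := by
      rw [Finsupp.coe_add, Finsupp.single_eq_pi_single]
    have hA : opPow (fun i => adjoint (R i)) (Pi.single j 1 + ⇑γ)
        = adjoint (R j) * opPow (fun i => adjoint (R i)) γ := by
      rw [opPow_add (S := fun i => adjoint (R i)) fun i k => (hR i k).star_star, opPow_single]
    have hB : opPow R (Pi.single j 1 + ⇑γ) = opPow R γ * R j := by
      rw [opPow_add hR, opPow_single, (Commute.opPow_right (fun i => hR j i) γ).eq]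
    rw [X, monomial_mul, one_mul, hereditaryCalc_monomial, hereditaryCalc_monomial, hγ, hA, hB]
    simp only [mul_smul_comm, smul_mul_assoc, mul_assoc]
  | add p q hp hq =>
    rw [mul_add, map_add, map_add, hp, hq, mul_add, add_mul]

theorem hereditaryCalc_sum_X_pow (R : Fin d → H →L[ℂ] H) (k : ℕ) :
    hereditaryCalc R ((∑ j, X j) ^ k)
      = ∑ γ ∈ Finset.Nat.antidiagonalTuple d k, ((Nat.multinomial univ γ : ℕ) : ℂ) •
          (opPow (fun i => adjoint (R i)) γ * opPow R γ) := by
  rw [Finset.sum_pow_eq_sum_piAntidiag, Finset.piAntidiag_univ_fin_eq_antidiagonalTuple, map_sum]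
  refine Finset.sum_congr rfl fun γ _ => ?_
  have hmono : ((Nat.multinomial univ γ : ℕ) : MvPolynomial (Fin d) ℂ) * ∏ i, X i ^ γ i
      = monomial (Finsupp.equivFunOnFinite.symm γ) ((Nat.multinomial univ γ : ℕ) : ℂ) := by
    rw [monomial_eq, Finsupp.prod_pow, map_natCast, Finsupp.coe_equivFunOnFinite_symm]
  rw [hmono, hereditaryCalc_monomial, Finsupp.coe_equivFunOnFinite_symm]

theorem Mop_eq_hereditaryCalc (R : Fin d → H →L[ℂ] H) (m : ℕ) :
    Mop R m = hereditaryCalc R ((∑ j, X j - 1) ^ m) := by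
  rw [sub_pow, map_sum, Mop]
  refine Finset.sum_congr rfl fun k hk => ?_
  have hsign : (-1 : MvPolynomial (Fin d) ℂ) ^ (k + m) = (-1) ^ (m - k) := by
    rw [Finset.mem_range] at hk
    rw [show k + m = m - k + 2 * k by omega, pow_add, pow_mul, neg_one_sq, one_pow, mul_one]
  have hterm : (-1 : MvPolynomial (Fin d) ℂ) ^ (k + m) * (∑ j, X j) ^ k * 1 ^ (m - k)
        * (m.choose k : MvPolynomial (Fin d) ℂ)
      = ((-1 : ℂ) ^ (m - k) * m.choose k) • (∑ j, X j) ^ k := by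
    rw [hsign, smul_eq_C_mul, map_mul, map_natCast, map_pow, map_neg, map_one]
    ring
  rw [hterm, map_smul, hereditaryCalc_sum_X_pow]

theorem Mop_succ {R : Fin d → H →L[ℂ] H} (hR : ∀ i j, Commute (R i) (R j)) (m : ℕ) :
    Mop R (m + 1) = ∑ j, adjoint (R j) * Mop R m * R j - Mop R m := by
  simp only [Mop_eq_hereditaryCalc R, pow_succ', sub_mul, one_mul, map_sub, Finset.sum_mul,
    map_sum, hereditaryCalc_X_mul hR]

end HereditaryCalculus

/-- `Λ_{m+1,n}(R) = Σ_j R_j* Λ_{m,n}(R) R_j − Λ_{m,n}(R)`. -/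
theorem lam_succ_left {d : ℕ} (R : Fin d → H →L[ℂ] H)
    (hcomm : ∀ i j, Commute (R i) (R j)) (m n : ℕ) :
    Lam R (m + 1) n =
      (∑ j, ContinuousLinearMap.adjoint (R j) * Lam R m n * R j) - Lam R m n := by
  have hA (k : ℕ) (j : Fin d) : Commute ((∑ i, adjoint (R i)) ^ k) (adjoint (R j)) :=
    (Commute.sum_left _ _ _ fun i _ => (hcomm i j).star_star).pow_left k
  have hB (k : ℕ) (j : Fin d) : Commute ((∑ i, R i) ^ k) (R j) :=
    (Commute.sum_left _ _ _ fun i _ => hcomm i j).pow_left k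
  simp only [Lam, Mop_succ hcomm, mul_sum_mul_mul_sub_mul_of_commute _ (hA _) (hB _), smul_sub,
    Finset.sum_sub_distrib, Finset.smul_sum, Finset.mul_sum, Finset.sum_mul, mul_smul_comm,
    smul_mul_assoc]
  rw [Finset.sum_comm]
end

section
/- Let H be a complex Hilbert space and let R = (R_1,…,R_d) be a commuting d-tuple of bounded linear operators on H. If R is (m,n)-isosymmetric (Λ_{m,n}(R) = 0), then for all integers m′ ≥ m and n′ ≥ n, R is (m′,n′)-isosymmetric (Λ_{m′,n′}(R) = 0). -/
open Finset ContinuousLinearMap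
open scoped InnerProductSpace

variable {H : Type*} [NormedAddCommGroup H] [InnerProductSpace ℂ H] [CompleteSpace H]

/-!
On `B(H)` consider `E X = Σ Rᵢ* X Rᵢ - X` and `D X = T* X - X T` with `T = Σ Rᵢ`. Because the
`Rᵢ` commute, so do the sandwich maps `X ↦ Rᵢ* X Rᵢ`, and the multinomial theorem gives
`M_m(R) = E^m 1`; the binomial theorem gives `Λ_{m,n}(R) = D^n M_m(R)`. Commutativity also makes
`D` and `E` commute, so `Λ_{m+a,n+b}(R) = D^b (E^a Λ_{m,n}(R))`.
-/

section Algebra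

variable {𝕜 A : Type*} [CommRing 𝕜] [Ring A] [Algebra 𝕜 A]

theorem Commute.sub_pow_eq_sum {x y : A} (h : Commute x y) (n : ℕ) :
    (x - y) ^ n =
      ∑ k ∈ range (n + 1), ((-1 : 𝕜) ^ (n - k) * n.choose k) • (x ^ k * y ^ (n - k)) := by
  rw [sub_eq_add_neg, h.neg_right.add_pow]
  refine sum_congr rfl fun k _ => ?_
  have hc : Commute ((-1 : A) ^ (n - k) * n.choose k) (x ^ k * y ^ (n - k)) :=
    ((Commute.neg_one_left _).pow_left _).mul_left (Nat.cast_commute _ _)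
  rw [Algebra.smul_def, map_mul, map_pow, map_neg, map_one, map_natCast, hc.eq, neg_pow,
    ((Commute.neg_one_left y).pow_pow _ _).eq]
  simp only [mul_assoc]

theorem Module.End.sub_one_pow_apply {M : Type*} [AddCommGroup M] [Module 𝕜 M]
    (T : Module.End 𝕜 M) (n : ℕ) (x : M) :
    ((T - 1) ^ n) x = ∑ k ∈ range (n + 1), ((-1 : 𝕜) ^ (n - k) * n.choose k) • (T ^ k) x := by
  simp only [(Commute.one_right T).sub_pow_eq_sum (𝕜 := 𝕜), one_pow, mul_one,
    LinearMap.sum_apply, LinearMap.smul_apply]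

theorem Finset.noncommProd_univ_eq_prod_ofFn {M : Type*} [Monoid M] {d : ℕ} (f : Fin d → M)
    (hc : ((univ : Finset (Fin d)) : Set (Fin d)).Pairwise (Function.onFun Commute f)) :
    univ.noncommProd f hc = (List.ofFn f).prod := by
  rw [List.ofFn_eq_map, ← noncommProd_toFinset _ _ _ (List.nodup_finRange d)]
  exact noncommProd_congr (by simp) (fun _ _ => rfl) _

namespace LinearMap

theorem commute_mulLeft_mulLeft {a b : A} (h : Commute a b) :
    Commute (mulLeft 𝕜 a) (mulLeft 𝕜 b) :=
  LinearMap.ext fun x => by simp only [Module.End.mul_apply, mulLeft_apply, ← mul_assoc, h.eq]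

theorem commute_mulRight_mulRight {a b : A} (h : Commute a b) :
    Commute (mulRight 𝕜 a) (mulRight 𝕜 b) :=
  LinearMap.ext fun x => by simp only [Module.End.mul_apply, mulRight_apply, mul_assoc, h.eq]

theorem commute_mulLeft_mul_mulRight {a a' b b' : A} (ha : Commute a a') (hb : Commute b b') :
    Commute (mulLeft 𝕜 a * mulRight 𝕜 b) (mulLeft 𝕜 a' * mulRight 𝕜 b') :=
  ((commute_mulLeft_mulLeft ha).mul_right (commute_mulLeft_right (R := 𝕜) a b')).mul_left
    ((commute_mulLeft_right (R := 𝕜) a' b).symm.mul_right (commute_mulRight_mulRight hb))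

theorem commute_mulLeft_sub_mulRight {α β a b : A} (ha : Commute α a) (hb : Commute β b) :
    Commute (mulLeft 𝕜 α - mulRight 𝕜 β) (mulLeft 𝕜 a * mulRight 𝕜 b) :=
  ((commute_mulLeft_mulLeft ha).mul_right (commute_mulLeft_right (R := 𝕜) α b)).sub_left
    ((commute_mulLeft_right (R := 𝕜) a β).symm.mul_right (commute_mulRight_mulRight hb))

theorem mulLeft_sub_mulRight_pow_apply (a b x : A) (n : ℕ) :
    ((mulLeft 𝕜 a - mulRight 𝕜 b) ^ n) x =
      ∑ k ∈ Finset.range (n + 1), ((-1 : 𝕜) ^ (n - k) * n.choose k) • (a ^ k * x * b ^ (n - k)) := by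
  simp only [(commute_mulLeft_right (R := 𝕜) a b).sub_pow_eq_sum (𝕜 := 𝕜), LinearMap.sum_apply,
    LinearMap.smul_apply, Module.End.mul_apply, pow_mulLeft, pow_mulRight, mulLeft_apply,
    mulRight_apply, mul_assoc]

theorem list_prod_mulLeft_mul_mulRight_apply {ι : Type*} (a b : ι → A)
    (hb : ∀ i j, Commute (b i) (b j)) (l : List ι) (x : A) :
    (l.map fun i => mulLeft 𝕜 (a i) * mulRight 𝕜 (b i)).prod x =
      (l.map a).prod * x * (l.map b).prod := by
  induction l with
  | nil => simp
  | cons i l ih =>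
    have hbl : Commute (b i) (l.map b).prod :=
      Commute.list_prod_right _ _ fun y hy => by
        obtain ⟨j, -, rfl⟩ := List.mem_map.mp hy
        exact hb i j
    simp only [List.map_cons, List.prod_cons, Module.End.mul_apply, ih, mulLeft_apply,
      mulRight_apply, mul_assoc, hbl.eq]

theorem sum_mulLeft_mul_mulRight_pow_apply {d : ℕ} (a b : Fin d → A)
    (ha : ∀ i j, Commute (a i) (a j)) (hb : ∀ i j, Commute (b i) (b j)) (k : ℕ) (x : A) :
    ((∑ i, mulLeft 𝕜 (a i) * mulRight 𝕜 (b i)) ^ k) x =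
      ∑ γ ∈ Nat.antidiagonalTuple d k, Nat.multinomial univ γ •
        ((List.ofFn fun i => a i ^ γ i).prod * x * (List.ofFn fun i => b i ^ γ i).prod) := by
  rw [sum_pow_eq_sum_piAntidiag_of_commute _ _
      (fun i _ j _ _ => commute_mulLeft_mul_mulRight (ha i j) (hb i j)),
    piAntidiag_univ_fin_eq_antidiagonalTuple, LinearMap.sum_apply]
  refine sum_congr rfl fun γ _ => ?_
  have hpow : ∀ i, (mulLeft 𝕜 (a i) * mulRight 𝕜 (b i)) ^ γ i =
      mulLeft 𝕜 (a i ^ γ i) * mulRight 𝕜 (b i ^ γ i) := fun i => by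
    rw [(commute_mulLeft_right (R := 𝕜) _ _).mul_pow, pow_mulLeft, pow_mulRight]
  rw [noncommProd_univ_eq_prod_ofFn, funext hpow, List.ofFn_eq_map, List.ofFn_eq_map,
    List.ofFn_eq_map, ← nsmul_eq_mul, LinearMap.smul_apply,
    list_prod_mulLeft_mul_mulRight_apply _ _ fun i j => (hb i j).pow_pow _ _]

end LinearMap

end Algebra

section Isosymmetric

open LinearMap (mulLeft mulRight)

variable {d : ℕ}

noncomputable def conjSum (R : Fin d → H →L[ℂ] H) : Module.End ℂ (H →L[ℂ] H) :=
  ∑ i, mulLeft ℂ (adjoint (R i)) * mulRight ℂ (R i)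

noncomputable def adjCommutator (R : Fin d → H →L[ℂ] H) : Module.End ℂ (H →L[ℂ] H) :=
  mulLeft ℂ (∑ i, adjoint (R i)) - mulRight ℂ (∑ i, R i)

theorem Lam_eq_adjCommutator_pow_apply (R : Fin d → H →L[ℂ] H) (m n : ℕ) :
    Lam R m n = (adjCommutator R ^ n) (Mop R m) :=
  (LinearMap.mulLeft_sub_mulRight_pow_apply (𝕜 := ℂ) _ _ _ _).symm

variable {R : Fin d → H →L[ℂ] H} (hcomm : ∀ i j, Commute (R i) (R j))
include hcomm

theorem commute_adjoint (i j : Fin d) : Commute (adjoint (R i)) (adjoint (R j)) := by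
  simpa only [← ContinuousLinearMap.star_eq_adjoint] using (hcomm i j).star_star

theorem Mop_eq_conjSum_sub_one_pow_apply (m : ℕ) : Mop R m = ((conjSum R - 1) ^ m) 1 := by
  rw [Module.End.sub_one_pow_apply, conjSum]
  refine sum_congr rfl fun k _ => ?_
  rw [LinearMap.sum_mulLeft_mul_mulRight_pow_apply _ _ (commute_adjoint hcomm) hcomm]
  simp only [mul_one, Nat.cast_smul_eq_nsmul, opPow]

theorem commute_adjCommutator_conjSum : Commute (adjCommutator R) (conjSum R) :=
  Commute.sum_right _ _ _ fun i _ => LinearMap.commute_mulLeft_sub_mulRight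
    (Commute.sum_left _ _ _ fun j _ => commute_adjoint hcomm j i)
    (Commute.sum_left _ _ _ fun j _ => hcomm j i)

theorem Lam_eq_apply_one (m n : ℕ) :
    Lam R m n = (adjCommutator R ^ n * (conjSum R - 1) ^ m) 1 := by
  rw [Lam_eq_adjCommutator_pow_apply, Mop_eq_conjSum_sub_one_pow_apply hcomm,
    Module.End.mul_apply]

end Isosymmetric

/-- an `(m,n)`-isosymmetric multioperator is `(m′,n′)`-isosymmetric
for all `m′ ≥ m`, `n′ ≥ n`. -/
theorem isosymmetric_mono {d : ℕ} (R : Fin d → H →L[ℂ] H)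
    (hcomm : ∀ i j, Commute (R i) (R j)) (m n : ℕ) (h : Lam R m n = 0) :
    ∀ m' n' : ℕ, m ≤ m' → n ≤ n' → Lam R m' n' = 0 := by
  intro m' n' hm hn
  obtain ⟨a, rfl⟩ := Nat.exists_eq_add_of_le' hm
  obtain ⟨b, rfl⟩ := Nat.exists_eq_add_of_le' hn
  have hDE : Commute (adjCommutator R) (conjSum R - 1) :=
    (commute_adjCommutator_conjSum hcomm).sub_right (Commute.one_right _)
  have hsplit : adjCommutator R ^ (b + n) * (conjSum R - 1) ^ (a + m) =
      (adjCommutator R ^ b * (conjSum R - 1) ^ a) *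
        (adjCommutator R ^ n * (conjSum R - 1) ^ m) := by
    rw [pow_add, pow_add, mul_assoc, ← mul_assoc (_ ^ n), (hDE.pow_pow n a).eq]
    simp only [mul_assoc]
  rw [Lam_eq_apply_one hcomm, hsplit, Module.End.mul_apply, ← Lam_eq_apply_one hcomm, h, map_zero]
end

section
/- Let H be a complex Hilbert space and let R = (R_1,…,R_d) be a commuting d-tuple of bounded linear operators on H, and let m ≥ 2, n ≥ 2 be integers such that Λ_{m−1,n−1}(R) ≠ 0. If R is an m-isometric multioperator (M_m(R) = 0), then the operators Λ_{0,n−1}(R), Λ_{1,n−1}(R), …, Λ_{m−1,n−1}(R) are linearly independent: whenever a_0,…,a_{m−1} ∈ ℂ satisfy Σ_{k=0}^{m−1} a_k Λ_{k,n−1}(R) = 0, then a_0 = a_1 = ⋯ = a_{m−1} = 0. -/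
open Finset ContinuousLinearMap
open scoped InnerProductSpace

variable {H : Type*} [NormedAddCommGroup H] [InnerProductSpace ℂ H] [CompleteSpace H]

/-! Put `E T = Σ i, R_i* T R_i` and `Φ = E - 1`. The maps `T ↦ R_i* T R_i` commute, so the
multinomial theorem gives `E^k 1 = Σ_{|γ|=k} (k!/γ!) R*^γ R^γ`, and then the binomial theorem gives
`M_m(R) = Φ^m 1`. As `E` commutes with `T ↦ S*^j T S^l` (`S = R_1 + ⋯ + R_d`), also
`Λ_{k,n}(R) = Φ^k Λ_{0,n}(R)`. Thus `Λ_{k,n-1}(R) = Φ^k v` with `Φ^m v = 0 ≠ Φ^(m-1) v`, and for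
such a vector, applying `Φ^(m-1-k)` to a vanishing combination isolates the `k`-th coefficient once
the earlier ones are known to vanish. -/

open Function

theorem Set.pairwise_commute_pow {ι M : Type*} [Monoid M] {a : ι → M}
    (ha : ∀ i j, Commute (a i) (a j)) (γ : ι → ℕ) (s : Set ι) :
    s.Pairwise (Commute on fun i => a i ^ γ i) :=
  fun i _ j _ _ => (ha i j).pow_pow _ _

theorem sub_one_pow_eq_sum_smul {𝕜 A : Type*} [CommRing 𝕜] [Ring A] [Algebra 𝕜 A] (x : A)
    (m : ℕ) :
    (x - 1) ^ m = ∑ k ∈ range (m + 1), ((-1 : 𝕜) ^ (m - k) * (m.choose k : 𝕜)) • x ^ k := by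
  rw [sub_eq_add_neg, (Commute.neg_one_right x).add_pow]
  refine sum_congr rfl fun k _ => ?_
  rw [Algebra.smul_def, map_mul, map_pow, map_neg, map_one, map_natCast, mul_assoc]
  exact (((Commute.neg_one_right _).pow_right _).mul_right (Nat.commute_cast _ _)).eq

theorem Finset.Nat.antidiagonalTuple_eq_piAntidiag (d k : ℕ) :
    Finset.Nat.antidiagonalTuple d k = piAntidiag univ k := by
  ext γ
  simp [Finset.Nat.mem_antidiagonalTuple, mem_piAntidiag]

theorem Module.End.eq_zero_of_sum_smul_pow_apply_eq_zero {R V : Type*} [Semiring R]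
    [AddCommMonoid V] [Module R V] [NoZeroSMulDivisors R V] (f : Module.End R V) (v : V) {m : ℕ}
    (hm : (f ^ m) v = 0) (hne : (f ^ (m - 1)) v ≠ 0) (a : ℕ → R)
    (ha : ∑ k ∈ range m, a k • (f ^ k) v = 0) : ∀ k < m, a k = 0 := by
  have hvanish : ∀ j, m ≤ j → (f ^ j) v = 0 := fun j hj => by
    rw [← Nat.sub_add_cancel hj, pow_add, Module.End.mul_apply, hm, map_zero]
  intro k
  induction k using Nat.strong_induction_on with
  | _ k ih =>
    intro hk
    have hk' := congrArg (f ^ (m - 1 - k)) ha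
    rw [map_sum, map_zero, sum_eq_single k] at hk'
    · rw [map_smul, ← Module.End.mul_apply, ← pow_add, Nat.sub_add_cancel (by omega)] at hk'
      exact (eq_zero_or_eq_zero_of_smul_eq_zero hk').resolve_right hne
    · intro j hj hjk
      rcases hjk.lt_or_gt with hlt | hgt
      · rw [ih j hlt (mem_range.mp hj), zero_smul, map_zero]
      · rw [map_smul, ← Module.End.mul_apply, ← pow_add, hvanish _ (by omega), smul_zero]
    · exact fun h => absurd (mem_range.mpr hk) h

section Sandwich

variable {𝕜 A : Type*} [CommSemiring 𝕜] [Semiring A] [Algebra 𝕜 A]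

theorem LinearMap.commute_mulLeftRight {a a' b b' : A} (ha : Commute a a') (hb : Commute b b') :
    Commute (LinearMap.mulLeftRight 𝕜 (a, b)) (LinearMap.mulLeftRight 𝕜 (a', b')) := by
  ext x
  simp only [Module.End.mul_apply, LinearMap.mulLeftRight_apply, ← mul_assoc, ha.eq]
  simp only [mul_assoc, hb.eq]

theorem LinearMap.mulLeftRight_pow_apply (a b x : A) (n : ℕ) :
    (LinearMap.mulLeftRight 𝕜 (a, b) ^ n) x = a ^ n * x * b ^ n := by
  induction n with
  | zero => simp
  | succ n ih =>
    rw [pow_succ', Module.End.mul_apply, ih, LinearMap.mulLeftRight_apply, pow_succ', pow_succ]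
    simp only [mul_assoc]

theorem LinearMap.noncommProd_mulLeftRight_apply {ι : Type*} (s : Finset ι) {a b : ι → A}
    (ha : ∀ i j, Commute (a i) (a j)) (hb : ∀ i j, Commute (b i) (b j)) (γ : ι → ℕ) (hc)
    (x : A) :
    (s.noncommProd (fun i => LinearMap.mulLeftRight 𝕜 (a i, b i) ^ γ i) hc) x =
      s.noncommProd (fun i => a i ^ γ i) (Set.pairwise_commute_pow ha γ _) * x *
        s.noncommProd (fun i => b i ^ γ i) (Set.pairwise_commute_pow hb γ _) := by
  induction s using Finset.cons_induction with
  | empty => simp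
  | cons i s hi ih =>
    have hbi : Commute (b i ^ γ i)
        (s.noncommProd (fun j => b j ^ γ j) (Set.pairwise_commute_pow hb γ _)) :=
      s.noncommProd_commute _ _ _ fun j _ => (hb i j).pow_pow _ _
    rw [noncommProd_cons, noncommProd_cons, noncommProd_cons, Module.End.mul_apply,
      ih (hc.mono fun _ => mem_cons.2 ∘ .inr), LinearMap.mulLeftRight_pow_apply, hbi.eq]
    simp only [mul_assoc]

variable (𝕜) in
def sandwichSum {ι : Type*} [Fintype ι] (a b : ι → A) : Module.End 𝕜 A :=
  ∑ i, LinearMap.mulLeftRight 𝕜 (a i, b i)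

theorem sandwichSum_pow_apply_one {ι : Type*} [Fintype ι] [DecidableEq ι] {a b : ι → A}
    (ha : ∀ i j, Commute (a i) (a j)) (hb : ∀ i j, Commute (b i) (b j)) (k : ℕ) :
    (sandwichSum 𝕜 a b ^ k) 1 = ∑ γ ∈ piAntidiag univ k, Nat.multinomial univ γ •
      (univ.noncommProd (fun i => a i ^ γ i) (Set.pairwise_commute_pow ha γ _) *
        univ.noncommProd (fun i => b i ^ γ i) (Set.pairwise_commute_pow hb γ _)) := by
  have hc : ((univ : Finset ι) : Set ι).Pairwise
      (Commute on fun i => LinearMap.mulLeftRight 𝕜 (a i, b i)) :=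
    fun i _ j _ _ => LinearMap.commute_mulLeftRight (ha i j) (hb i j)
  rw [sandwichSum, sum_pow_eq_sum_piAntidiag_of_commute _ _ hc]
  simp only [LinearMap.coe_sum, Finset.sum_apply, Module.End.mul_apply, Module.End.natCast_apply,
    LinearMap.noncommProd_mulLeftRight_apply _ ha hb, mul_one]

end Sandwich

set_option linter.unusedSectionVars false in
theorem opPow_eq_noncommProd {d : ℕ} {T : Fin d → H →L[ℂ] H} (hT : ∀ i j, Commute (T i) (T j))
    (γ : Fin d → ℕ) :
    opPow T γ = univ.noncommProd (fun i => T i ^ γ i) (Set.pairwise_commute_pow hT γ _) := by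
  simp only [opPow, List.ofFn_eq_map, ← List.toFinset_finRange]
  exact (noncommProd_toFinset _ _ _ (List.nodup_finRange d)).symm

theorem Commute.adjoint {S T : H →L[ℂ] H} (h : Commute S T) : Commute (adjoint S) (adjoint T) := by
  simpa only [star_eq_adjoint] using commute_star_star.mpr h

theorem Mop_eq_sub_one_pow_apply_one {d : ℕ} {R : Fin d → H →L[ℂ] H}
    (hcomm : ∀ i j, Commute (R i) (R j)) (m : ℕ) :
    Mop R m = ((sandwichSum ℂ (fun i => adjoint (R i)) R - 1) ^ m) 1 := by
  have hadj : ∀ i j, Commute (adjoint (R i)) (adjoint (R j)) := fun i j => (hcomm i j).adjoint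
  rw [sub_one_pow_eq_sum_smul (𝕜 := ℂ), Mop, LinearMap.sum_apply]
  refine sum_congr rfl fun k _ => ?_
  rw [LinearMap.smul_apply, sandwichSum_pow_apply_one hadj hcomm,
    Finset.Nat.antidiagonalTuple_eq_piAntidiag]
  simp only [opPow_eq_noncommProd hadj, opPow_eq_noncommProd hcomm, Nat.cast_smul_eq_nsmul]

theorem Lam_eq_sub_one_pow_apply {d : ℕ} {R : Fin d → H →L[ℂ] H}
    (hcomm : ∀ i j, Commute (R i) (R j)) (k n : ℕ) :
    Lam R k n = ((sandwichSum ℂ (fun i => adjoint (R i)) R - 1) ^ k) (Lam R 0 n) := by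
  set E := sandwichSum ℂ (fun i => adjoint (R i)) R
  set C : Module.End ℂ (H →L[ℂ] H) := ∑ j ∈ range (n + 1), ((-1 : ℂ) ^ (n - j) * (n.choose j : ℂ)) •
    LinearMap.mulLeftRight ℂ ((∑ i, adjoint (R i)) ^ j, (∑ i, R i) ^ (n - j))
  have hLam : ∀ p, Lam R p n = C (Mop R p) := fun p => by
    simp only [C, Lam, LinearMap.sum_apply, LinearMap.smul_apply, LinearMap.mulLeftRight_apply]
  have hCE : Commute C E := Commute.sum_left _ _ _ fun j _ => .smul_left (Commute.sum_right _ _ _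
    fun i _ => LinearMap.commute_mulLeftRight
      ((Commute.sum_left _ _ _ fun t _ => (hcomm t i).adjoint).pow_left j)
      ((Commute.sum_left _ _ _ fun t _ => hcomm t i).pow_left (n - j))) _
  rw [hLam, hLam, Mop_eq_sub_one_pow_apply_one hcomm, Mop_eq_sub_one_pow_apply_one hcomm, pow_zero,
    Module.End.one_apply, ← Module.End.mul_apply, ((hCE.sub_right (.one_right C)).pow_right k).eq,
    Module.End.mul_apply]

theorem lam_linear_independent_isometric_general {d : ℕ} (R : Fin d → H →L[ℂ] H)
    (hcomm : ∀ i j, Commute (R i) (R j)) (m n : ℕ)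
    (hne : Lam R (m - 1) (n - 1) ≠ 0) (hiso : Mop R m = 0)
    (a : ℕ → ℂ) (ha : ∑ k ∈ Finset.range m, a k • Lam R k (n - 1) = 0) :
    ∀ k < m, a k = 0 := by
  set Φ := sandwichSum ℂ (fun i => adjoint (R i)) R - 1
  have hLam : ∀ k, Lam R k (n - 1) = (Φ ^ k) (Lam R 0 (n - 1)) :=
    fun k => Lam_eq_sub_one_pow_apply hcomm k (n - 1)
  refine Module.End.eq_zero_of_sum_smul_pow_apply_eq_zero Φ (Lam R 0 (n - 1)) ?_ ?_ a ?_
  · rw [← hLam]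
    simp only [Lam, hiso, mul_zero, zero_mul, smul_zero, sum_const_zero]
  · rwa [← hLam]
  · exact (sum_congr rfl fun k _ => congrArg _ (hLam k).symm).trans ha

/-- if `R` is a strict `m`-isometric multioperator (with
`Λ_{m−1,n−1}(R) ≠ 0`), then `Λ_{0,n−1}(R), …, Λ_{m−1,n−1}(R)` are linearly independent. -/
theorem lam_linear_independent_isometric {d : ℕ} (R : Fin d → H →L[ℂ] H)
    (hcomm : ∀ i j, Commute (R i) (R j)) (m n : ℕ) (hm : 2 ≤ m) (hn : 2 ≤ n)
    (hne : Lam R (m - 1) (n - 1) ≠ 0) (hiso : Mop R m = 0)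
    (a : ℕ → ℂ) (ha : ∑ k ∈ Finset.range m, a k • Lam R k (n - 1) = 0) :
    ∀ k < m, a k = 0 :=
  lam_linear_independent_isometric_general R hcomm m n hne hiso a ha
end

section
/- Let H be a complex Hilbert space and let R = (R_1,…,R_d) be a commuting d-tuple of bounded linear operators on H, and let m ≥ 2, n ≥ 2 be integers such that Λ_{m−1,n−1}(R) ≠ 0. If R is an n-symmetric multioperator (S_n(R) = 0), then the operators Λ_{m−1,0}(R), Λ_{m−1,1}(R), …, Λ_{m−1,n−1}(R) are linearly independent: whenever a_0,…,a_{n−1} ∈ ℂ satisfy Σ_{l=0}^{n−1} a_l Λ_{m−1,l}(R) = 0, then a_0 = a_1 = ⋯ = a_{n−1} = 0. -/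
/-! With `A = Σ R_i*`, `B = Σ R_i` and the generalized derivation `δ(X) = A X − X B`, one has
`Λ_{m,l}(R) = δ^l(M_m(R))` and `S_n(R) = δ^n(1)`. Every summand `R*^γ R^γ` of `M_m(R)` is
`R*^γ · 1 · R^γ` with `R*^γ` commuting with `A` and `R^γ` with `B`, so `δ^n` maps it to
`R*^γ S_n(R) R^γ = 0`. Thus `x = M_{m-1}(R)` satisfies `δ^n x = 0 ≠ δ^{n-1} x`, which makes
`x, δx, …, δ^{n-1}x` linearly independent: applying `δ^{n-1-l}` to a vanishing combination
isolates the coefficient of `δ^l x`. -/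

open Finset ContinuousLinearMap
open scoped InnerProductSpace

variable {H : Type*} [NormedAddCommGroup H] [InnerProductSpace ℂ H] [CompleteSpace H]

section GenDerivation

variable (𝕜 : Type*) {A : Type*} [CommRing 𝕜] [Ring A] [Algebra 𝕜 A]

noncomputable def genDerivation (a b : A) : A →ₗ[𝕜] A :=
  LinearMap.mulLeft 𝕜 a - LinearMap.mulRight 𝕜 b

variable {𝕜}

@[simp]
theorem genDerivation_apply (a b x : A) : genDerivation 𝕜 a b x = a * x - x * b := rfl

theorem genDerivation_pow_apply (a b x : A) (n : ℕ) :
    (genDerivation 𝕜 a b ^ n) x = ∑ k ∈ range (n + 1),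
      ((-1 : 𝕜) ^ (n - k) * (n.choose k : 𝕜)) • (a ^ k * x * b ^ (n - k)) := by
  have hcomm : Commute (LinearMap.mulLeft 𝕜 a) (-LinearMap.mulRight 𝕜 b) :=
    (LinearMap.commute_mulLeft_right (R := 𝕜) a b).neg_right
  rw [genDerivation, sub_eq_add_neg, hcomm.add_pow, LinearMap.sum_apply]
  refine sum_congr rfl fun k _ => ?_
  rw [← neg_one_smul 𝕜 (LinearMap.mulRight 𝕜 b), smul_pow, LinearMap.pow_mulLeft,
    LinearMap.pow_mulRight]
  simp only [Module.End.mul_apply, Module.End.natCast_apply, LinearMap.smul_apply,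
    LinearMap.mulLeft_apply, LinearMap.mulRight_apply, ← Nat.cast_smul_eq_nsmul 𝕜,
    mul_smul_comm, smul_mul_assoc, smul_smul, mul_assoc]

theorem genDerivation_pow_mul_mul {a b p q : A} (hp : Commute p a) (hq : Commute q b) (x : A)
    (n : ℕ) : (genDerivation 𝕜 a b ^ n) (p * x * q) = p * (genDerivation 𝕜 a b ^ n) x * q := by
  induction n with
  | zero => rfl
  | succ n ih =>
    rw [pow_succ', Module.End.mul_apply, ih, Module.End.mul_apply, genDerivation_apply,
      genDerivation_apply]
    simp only [mul_sub, sub_mul, ← mul_assoc, hp.eq]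
    simp only [mul_assoc, hq.eq]

end GenDerivation

theorem LinearMap.linearIndependent_pow_apply {K V : Type*} [Ring K] [AddCommGroup V]
    [Module K V] [IsCancelMulZero K] [Module.IsTorsionFree K V] (f : V →ₗ[K] V) {x : V} {n : ℕ}
    (hx : (f ^ n) x = 0) (hx' : (f ^ (n - 1)) x ≠ 0) :
    LinearIndependent K (fun i : Fin n => (f ^ (i : ℕ)) x) := by
  have hvanish : ∀ k, n ≤ k → (f ^ k) x = 0 := fun k hk => by
    rw [← Nat.sub_add_cancel hk, pow_add, Module.End.mul_apply, hx, map_zero]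
  rw [Fintype.linearIndependent_iff]
  intro g hg i
  induction i using WellFoundedLT.induction with
  | _ i ih =>
    have h := congrArg (f ^ (n - 1 - i)) hg
    simp only [map_sum, map_smul, ← Module.End.mul_apply, ← pow_add, map_zero] at h
    rw [sum_eq_single i] at h
    · rw [show n - 1 - i + i = n - 1 by omega] at h
      exact (smul_eq_zero.mp h).resolve_right hx'
    · intro j _ hji
      rcases lt_or_gt_of_ne hji with hlt | hgt
      · rw [ih j hlt, zero_smul]
      · rw [hvanish _ (by omega), smul_zero]
    · simp

section Multioperator

variable {d : ℕ} (R : Fin d → H →L[ℂ] H)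

theorem commute_sum_opPow {E : Type*} [NormedAddCommGroup E] [InnerProductSpace ℂ E]
    {T : Fin d → E →L[ℂ] E} (hT : ∀ i j, Commute (T i) (T j))
    (γ : Fin d → ℕ) : Commute (∑ i, T i) (opPow T γ) :=
  Commute.sum_left _ _ _ fun i _ => Commute.list_prod_right _ _ fun _ hy => by
    obtain ⟨j, rfl⟩ := List.mem_ofFn.mp hy
    exact (hT i j).pow_right _

theorem Lam_eq_genDerivation_pow (m n : ℕ) :
    Lam R m n = (genDerivation ℂ (∑ i, adjoint (R i)) (∑ i, R i) ^ n) (Mop R m) := by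
  rw [genDerivation_pow_apply]
  rfl

theorem Sop_eq_genDerivation_pow (n : ℕ) :
    Sop R n = (genDerivation ℂ (∑ i, adjoint (R i)) (∑ i, R i) ^ n) 1 := by
  simp only [genDerivation_pow_apply, mul_one]
  rfl

theorem Lam_eq_zero_of_Sop_eq_zero (hcomm : ∀ i j, Commute (R i) (R j)) (m : ℕ) {n : ℕ}
    (hS : Sop R n = 0) : Lam R m n = 0 := by
  have hcomm_adj : ∀ i j, Commute (adjoint (R i)) (adjoint (R j)) := fun i j => by
    simpa only [star_eq_adjoint] using (hcomm i j).star_star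
  rw [Lam_eq_genDerivation_pow, Mop, map_sum]
  refine sum_eq_zero fun k _ => ?_
  rw [map_smul, map_sum]
  refine (congrArg _ (sum_eq_zero fun γ _ => ?_)).trans (smul_zero _)
  rw [map_smul, ← mul_one (opPow (fun i => adjoint (R i)) γ),
    genDerivation_pow_mul_mul (commute_sum_opPow hcomm_adj γ).symm
      (commute_sum_opPow hcomm γ).symm, ← Sop_eq_genDerivation_pow, hS, mul_zero, zero_mul,
    smul_zero]

end Multioperator

theorem lam_linear_independent_symmetric_general {d : ℕ} (R : Fin d → H →L[ℂ] H)
    (hcomm : ∀ i j, Commute (R i) (R j)) (m n : ℕ)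
    (hne : Lam R (m - 1) (n - 1) ≠ 0) (hsym : Sop R n = 0)
    (a : ℕ → ℂ) (ha : ∑ l ∈ Finset.range n, a l • Lam R (m - 1) l = 0) :
    ∀ l < n, a l = 0 := by
  have hvanish : Lam R (m - 1) n = 0 := Lam_eq_zero_of_Sop_eq_zero R hcomm _ hsym
  simp only [Lam_eq_genDerivation_pow] at hvanish hne ha
  have hind := LinearMap.linearIndependent_pow_apply _ hvanish hne
  intro l hl
  refine Fintype.linearIndependent_iff.mp hind (fun i => a i) ?_ ⟨l, hl⟩
  exact (Fin.sum_univ_eq_sum_range (fun l => a l • _) n).trans ha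

/-- if `R` is a strict `n`-symmetric multioperator (with
`Λ_{m−1,n−1}(R) ≠ 0`), then `Λ_{m−1,0}(R), …, Λ_{m−1,n−1}(R)` are linearly independent. -/
theorem lam_linear_independent_symmetric {d : ℕ} (R : Fin d → H →L[ℂ] H)
    (hcomm : ∀ i j, Commute (R i) (R j)) (m n : ℕ) (hm : 2 ≤ m) (hn : 2 ≤ n)
    (hne : Lam R (m - 1) (n - 1) ≠ 0) (hsym : Sop R n = 0)
    (a : ℕ → ℂ) (ha : ∑ l ∈ Finset.range n, a l • Lam R (m - 1) l = 0) :
    ∀ l < n, a l = 0 :=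
  lam_linear_independent_symmetric_general R hcomm m n hne hsym a ha
end

section
/- Let H be a complex Hilbert space and let R = (R_1,…,R_d) be a commuting d-tuple of bounded linear operators on H that is (m,n)-isosymmetric (Λ_{m,n}(R) = 0), with m, n positive integers. If μ = (μ_1,…,μ_d) ∈ ℂ^d is a joint eigenvalue of R, i.e. there exists a nonzero vector u ∈ H with R_l u = μ_l u for every l = 1,…,d, then either Σ_{l=1}^{d} |μ_l|² = 1 or μ_1 + ⋯ + μ_d is real (its imaginary part is zero). -/
/-!
Tested against a joint eigenvector `u`, each summand of `Λ_{m,n}(R)` collapses to a scalar: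
`R^γ u = μ^γ u` and `⟪u, R*^γ w⟫ = conj (μ^γ) ⟪u, w⟫`, so `⟪u, R*^γ R^γ u⟫ = ∏ |μ_i|^{2γ_i} ‖u‖²`.
The multinomial theorem turns `⟪u, M_m(R) u⟫` into `(Σ |μ_l|² - 1)^m ‖u‖²`, and the binomial
theorem, applied to `s = Σ μ_l`, gives `⟪u, Λ_{m,n}(R) u⟫ = (conj s - s)^n (Σ |μ_l|² - 1)^m ‖u‖²`. This vanishes
and `u ≠ 0`, so one of the first two factors is zero.
-/

open Finset ContinuousLinearMap
open scoped InnerProductSpace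

variable {H : Type*} [NormedAddCommGroup H] [InnerProductSpace ℂ H] [CompleteSpace H]

theorem sum_range_neg_one_pow_mul_choose_mul_pow {A : Type*} [CommRing A] (x y : A) (n : ℕ) :
    ∑ k ∈ range (n + 1), ((-1 : A) ^ (n - k) * (n.choose k : A)) * (x ^ k * y ^ (n - k)) =
      (x - y) ^ n := by
  rw [sub_eq_add_neg, add_pow]
  refine sum_congr rfl fun k _ => ?_
  rw [neg_pow]
  ring

section EigenSubmonoid

variable {𝕜 E : Type*} [CommSemiring 𝕜] [TopologicalSpace E] [AddCommMonoid E] [Module 𝕜 E]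

def eigenSubmonoid (u : E) : Submonoid ((E →L[𝕜] E) × 𝕜) where
  carrier := {p | p.1 u = p.2 • u}
  one_mem' := by simp
  mul_mem' {p q} (hp : p.1 u = p.2 • u) (hq : q.1 u = q.2 • u) := by
    change (p.1 * q.1) u = (p.2 * q.2) • u
    rw [mul_apply_eq_comp, hq, map_smul, hp, smul_smul, mul_comm]

theorem mem_eigenSubmonoid {u : E} {p : (E →L[𝕜] E) × 𝕜} :
    p ∈ eigenSubmonoid u ↔ p.1 u = p.2 • u :=
  Iff.rfl

theorem sum_mem_eigenSubmonoid [ContinuousAdd E] {ι : Type*} (s : Finset ι) {u : E}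
    {A : ι → E →L[𝕜] E} {c : ι → 𝕜} (h : ∀ i ∈ s, (A i, c i) ∈ eigenSubmonoid u) :
    (∑ i ∈ s, A i, ∑ i ∈ s, c i) ∈ eigenSubmonoid u := by
  rw [mem_eigenSubmonoid, _root_.sum_apply, sum_smul]
  exact sum_congr rfl h

end EigenSubmonoid

section AdjointEigenSubmonoid

variable {𝕜 E : Type*} [RCLike 𝕜] [NormedAddCommGroup E] [InnerProductSpace 𝕜 E]

/-- In a Hilbert space, `(A, c)` lies here iff `A† u = conj c • u`. -/
def adjointEigenSubmonoid (u : E) : Submonoid ((E →L[𝕜] E) × 𝕜) where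
  carrier := {p | ∀ w, ⟪u, p.1 w⟫_𝕜 = p.2 * ⟪u, w⟫_𝕜}
  one_mem' := by simp
  mul_mem' {p q} hp hq w := by
    change ⟪u, (p.1 * q.1) w⟫_𝕜 = p.2 * q.2 * ⟪u, w⟫_𝕜
    rw [mul_apply_eq_comp, hp, hq, mul_assoc]

theorem mem_adjointEigenSubmonoid {u : E} {p : (E →L[𝕜] E) × 𝕜} :
    p ∈ adjointEigenSubmonoid u ↔ ∀ w, ⟪u, p.1 w⟫_𝕜 = p.2 * ⟪u, w⟫_𝕜 :=
  Iff.rfl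

theorem adjoint_mem_adjointEigenSubmonoid [CompleteSpace E] {u : E} {A : E →L[𝕜] E} {c : 𝕜}
    (h : (A, c) ∈ eigenSubmonoid u) :
    (adjoint A, starRingEnd 𝕜 c) ∈ adjointEigenSubmonoid u := fun w => by
  rw [adjoint_inner_right, mem_eigenSubmonoid.mp h, inner_smul_left]

end AdjointEigenSubmonoid

theorem opPow_mem {E N : Type*} [NormedAddCommGroup E] [InnerProductSpace ℂ E] [CommMonoid N]
    {S : Submonoid ((E →L[ℂ] E) × N)} {d : ℕ} {R : Fin d → E →L[ℂ] E} {μ : Fin d → N}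
    (h : ∀ i, (R i, μ i) ∈ S) (γ : Fin d → ℕ) :
    (opPow R γ, ∏ i, μ i ^ γ i) ∈ S := by
  set L := List.ofFn fun i => (R i, μ i) ^ γ i
  have hL : (opPow R γ, ∏ i, μ i ^ γ i) = L.prod := by
    refine Prod.ext ?_ ?_
    · simpa [L, opPow, Function.comp_def] using (map_list_prod (MonoidHom.fst _ N) L).symm
    · simpa [L, Function.comp_def, List.prod_ofFn] using
        (map_list_prod (MonoidHom.snd (E →L[ℂ] E) N) L).symm
  rw [hL]
  exact S.list_prod_mem fun p hp => by
    obtain ⟨i, rfl⟩ := List.mem_ofFn.mp hp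
    exact pow_mem (h i) _

section JointEigenvector

variable {d : ℕ} {R : Fin d → H →L[ℂ] H} {μ : Fin d → ℂ} {u : H}

theorem inner_opPow_adjoint_opPow_of_joint_eigenvector (heig : ∀ l, R l u = μ l • u)
    (γ : Fin d → ℕ) :
    ⟪u, opPow (fun i => adjoint (R i)) γ (opPow R γ u)⟫_ℂ =
      (∏ i, ((‖μ i‖ ^ 2 : ℝ) : ℂ) ^ γ i) * ⟪u, u⟫_ℂ := by
  have hR : (opPow R γ, ∏ i, μ i ^ γ i) ∈ eigenSubmonoid u := opPow_mem heig γ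
  have hR' : (opPow (fun i => adjoint (R i)) γ, ∏ i, starRingEnd ℂ (μ i) ^ γ i) ∈
      adjointEigenSubmonoid u :=
    opPow_mem (fun i => adjoint_mem_adjointEigenSubmonoid (heig i)) γ
  rw [mem_eigenSubmonoid.mp hR, mem_adjointEigenSubmonoid.mp hR', inner_smul_right, ← mul_assoc,
    ← prod_mul_distrib]
  simp_rw [← mul_pow, Complex.conj_mul']
  push_cast
  rfl

theorem inner_Mop_of_joint_eigenvector (heig : ∀ l, R l u = μ l • u) (m : ℕ) :
    ⟪u, Mop R m u⟫_ℂ = (((∑ l, ‖μ l‖ ^ 2 : ℝ) : ℂ) - 1) ^ m * ⟪u, u⟫_ℂ := by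
  have hmultinomial : ∀ k, ∑ γ ∈ Finset.Nat.antidiagonalTuple d k,
      (Nat.multinomial univ γ : ℂ) * ∏ i, ((‖μ i‖ ^ 2 : ℝ) : ℂ) ^ γ i =
        ((∑ l, ‖μ l‖ ^ 2 : ℝ) : ℂ) ^ k := fun k => by
    rw [Complex.ofReal_sum, sum_pow_eq_sum_piAntidiag, piAntidiag_univ_fin_eq_antidiagonalTuple]
  simp only [Mop, _root_.sum_apply, smul_apply, mul_apply_eq_comp, inner_sum, inner_smul_right,
    inner_opPow_adjoint_opPow_of_joint_eigenvector heig]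
  rw [← sum_range_neg_one_pow_mul_choose_mul_pow _ 1, sum_mul]
  refine sum_congr rfl fun k _ => ?_
  rw [← hmultinomial k, one_pow, mul_one]
  simp only [sum_mul, mul_sum, mul_assoc]

theorem inner_Lam_of_joint_eigenvector (heig : ∀ l, R l u = μ l • u) (m n : ℕ) :
    ⟪u, Lam R m n u⟫_ℂ =
      (starRingEnd ℂ (∑ l, μ l) - ∑ l, μ l) ^ n * ⟪u, Mop R m u⟫_ℂ := by
  have hS : (∑ i, R i, ∑ i, μ i) ∈ eigenSubmonoid u := sum_mem_eigenSubmonoid _ fun i _ => heig i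
  have hS' : (∑ i, adjoint (R i), starRingEnd ℂ (∑ i, μ i)) ∈ adjointEigenSubmonoid u := by
    rw [← map_sum]
    exact adjoint_mem_adjointEigenSubmonoid hS
  simp only [Lam, _root_.sum_apply, smul_apply, mul_apply_eq_comp, inner_sum, inner_smul_right]
  rw [← sum_range_neg_one_pow_mul_choose_mul_pow, sum_mul]
  refine sum_congr rfl fun k _ => ?_
  have hSpow := pow_mem hS (n - k)
  have hSpow' := pow_mem hS' k
  rw [Prod.pow_mk, mem_eigenSubmonoid] at hSpow
  rw [Prod.pow_mk, mem_adjointEigenSubmonoid] at hSpow'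
  rw [hSpow', hSpow, map_smul, inner_smul_right]
  ring

end JointEigenvector

theorem joint_eigenvalue_alternative_general {d : ℕ} (R : Fin d → H →L[ℂ] H)
    (m n : ℕ) (hm : 0 < m) (hn : 0 < n)
    (hiso : Lam R m n = 0) (μ : Fin d → ℂ)
    (u : H) (hu : u ≠ 0) (heig : ∀ l, R l u = μ l • u) :
    (∑ l, ‖μ l‖ ^ 2) = 1 ∨ (∑ l, μ l).im = 0 := by
  have h := inner_Lam_of_joint_eigenvector heig m n
  rw [hiso, zero_apply, inner_zero_right, inner_Mop_of_joint_eigenvector heig, eq_comm] at h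
  simp only [mul_eq_zero, pow_eq_zero_iff hn.ne', pow_eq_zero_iff hm.ne', sub_eq_zero,
    inner_self_eq_zero, hu, or_false, Complex.conj_eq_iff_im] at h
  exact_mod_cast h.symm

/-- if `R` is `(m,n)`-isosymmetric and `μ` is a joint eigenvalue of `R`,
then `Σ |μ_l|² = 1` or `μ_1+⋯+μ_d` is real. -/
theorem joint_eigenvalue_alternative {d : ℕ} (R : Fin d → H →L[ℂ] H)
    (hcomm : ∀ i j, Commute (R i) (R j)) (m n : ℕ) (hm : 0 < m) (hn : 0 < n)
    (hiso : Lam R m n = 0) (μ : Fin d → ℂ)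
    (u : H) (hu : u ≠ 0) (heig : ∀ l, R l u = μ l • u) :
    (∑ l, ‖μ l‖ ^ 2) = 1 ∨ (∑ l, μ l).im = 0 :=
  joint_eigenvalue_alternative_general R m n hm hn hiso μ u hu heig
end

section
/- Let H be a complex Hilbert space and let R = (R_1,…,R_d) be a commuting d-tuple of bounded linear operators on H that is (m,n)-isosymmetric (Λ_{m,n}(R) = 0), with m, n positive integers. Let μ = (μ_1,…,μ_d) and μ′ = (μ′_1,…,μ′_d) in ℂ^d satisfy Σ_{j=1}^{d} μ_j · conj(μ′_j) ≠ 1 and Σ_{j=1}^{d} (μ_j − conj(μ′_j)) ≠ 0. If (u_k) and (v_k) are sequences of unit vectors in H such that ‖(R_j − μ_j)u_k‖ → 0 and ‖(R_j − μ′_j)v_k‖ → 0 as k → ∞ for every j = 1,…,d, then ⟨u_k, v_k⟩ → 0 as k → ∞. -/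
open Finset ContinuousLinearMap
open scoped InnerProductSpace

variable {H : Type*} [NormedAddCommGroup H] [InnerProductSpace ℂ H] [CompleteSpace H]

/-!
Call `A` approximately scalar `a` along `w` when `A w_k - a • w_k → 0`. Such pairs are closed
under sums and products, and since the scalars commute, the order of the factors is irrelevant;
in particular the adjoint of `R*^γ` is approximately scalar `∏ μ_j ^ γ_j` along `u`. If moreover
`⟪X v_k, u_k⟫ ≈ c ⟪v_k, u_k⟫` for bounded `u`, `v`, then `⟪B X A v_k, u_k⟫ ≈ b c conj(a) ⟪v_k, u_k⟫`
whenever `star B` is approximately `b` along `u` and `A` approximately `a` along `v`.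
Expanding `M_m` and `Λ_{m,n}` and resumming with the multinomial and binomial theorems gives
`⟪Λ_{m,n} v_k, u_k⟫ ≈ (∑ (μ_j - conj μ'_j))^n (∑ μ_j conj μ'_j - 1)^m ⟪v_k, u_k⟫`.
The left side vanishes and the constant does not, so `⟪v_k, u_k⟫ → 0`.
-/

open Filter Topology ComplexConjugate

section ApproxEigen

variable {ι 𝕜 E : Type*} [NormedField 𝕜] [NormedAddCommGroup E] [NormedSpace 𝕜 E]
  {l : Filter ι} {w : ι → E}

def ApproxEigen (l : Filter ι) (w : ι → E) (A : E →L[𝕜] E) (a : 𝕜) : Prop :=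
  Tendsto (fun i => A (w i) - a • w i) l (𝓝 0)

theorem approxEigen_one : ApproxEigen l w (1 : E →L[𝕜] E) 1 := by
  simp [ApproxEigen, tendsto_const_nhds]

theorem ApproxEigen.mul {A B : E →L[𝕜] E} {a b : 𝕜} (hA : ApproxEigen l w A a)
    (hB : ApproxEigen l w B b) : ApproxEigen l w (A * B) (a * b) := by
  have hAB : Tendsto (fun i => A (B (w i) - b • w i)) l (𝓝 0) :=
    (A.continuous.tendsto' 0 0 (map_zero A)).comp hB
  have key : ∀ i, (A * B) (w i) - (a * b) • w i
      = A (B (w i) - b • w i) + b • (A (w i) - a • w i) := fun i => by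
    rw [mul_apply_eq_comp, map_sub, map_smul, smul_sub, smul_smul, mul_comm b a]
    abel
  simpa only [ApproxEigen, key, smul_zero, add_zero] using hAB.add (hA.const_smul b)

theorem ApproxEigen.pow {A : E →L[𝕜] E} {a : 𝕜} (hA : ApproxEigen l w A a) (k : ℕ) :
    ApproxEigen l w (A ^ k) (a ^ k) := by
  induction k with
  | zero => simpa using approxEigen_one
  | succ k ih => simpa only [pow_succ] using ih.mul hA

theorem ApproxEigen.sum {κ : Type*} (s : Finset κ) {A : κ → E →L[𝕜] E} {a : κ → 𝕜}
    (h : ∀ j ∈ s, ApproxEigen l w (A j) (a j)) :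
    ApproxEigen l w (∑ j ∈ s, A j) (∑ j ∈ s, a j) := by
  simpa only [ApproxEigen, _root_.sum_apply, sum_smul, ← sum_sub_distrib, sum_const_zero]
    using tendsto_finsetSum s h

theorem ApproxEigen.list_prod {κ : Type*} (L : List κ) {A : κ → E →L[𝕜] E} {a : κ → 𝕜}
    (h : ∀ j ∈ L, ApproxEigen l w (A j) (a j)) :
    ApproxEigen l w (L.map A).prod (L.map a).prod := by
  induction L with
  | nil => simpa using approxEigen_one
  | cons j L ih =>
    simp only [List.map_cons, List.prod_cons]
    exact (h j List.mem_cons_self).mul (ih fun j hj => h j (List.mem_cons_of_mem _ hj))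

end ApproxEigen

theorem star_list_prod_map {κ M : Type*} [Monoid M] [StarMul M] (L : List κ) (f : κ → M) :
    star (L.map f).prod = (L.reverse.map fun j => star (f j)).prod := by
  induction L with
  | nil => simp
  | cons j L ih => simp [ih]

section OpPow

variable {ι E : Type*} [NormedAddCommGroup E] [InnerProductSpace ℂ E] {l : Filter ι}
  {w : ι → E} {d : ℕ}

theorem ApproxEigen.opPow (R : Fin d → E →L[ℂ] E) {c : Fin d → ℂ}
    (h : ∀ j, ApproxEigen l w (R j) (c j)) (γ : Fin d → ℕ) :
    ApproxEigen l w (opPow R γ) (∏ j, c j ^ γ j) := by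
  have := ApproxEigen.list_prod (List.finRange d) (A := fun j => R j ^ γ j)
    (a := fun j => c j ^ γ j) fun j _ => (h j).pow (γ j)
  rwa [← List.ofFn_eq_map, ← List.ofFn_eq_map, List.prod_ofFn] at this

theorem ApproxEigen.star_opPow_adjoint [CompleteSpace E] (R : Fin d → E →L[ℂ] E)
    {c : Fin d → ℂ} (h : ∀ j, ApproxEigen l w (R j) (c j)) (γ : Fin d → ℕ) :
    ApproxEigen l w (star (_root_.opPow (fun j => adjoint (R j)) γ)) (∏ j, c j ^ γ j) := by
  have := ApproxEigen.list_prod (List.finRange d).reverse (A := fun j => R j ^ γ j)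
    (a := fun j => c j ^ γ j) fun j _ => (h j).pow (γ j)
  rw [List.map_reverse (f := fun j => c j ^ γ j), List.prod_reverse, ← List.ofFn_eq_map,
    List.prod_ofFn] at this
  simpa [_root_.opPow, List.ofFn_eq_map, star_list_prod_map, star_pow, star_eq_adjoint]
    using this

end OpPow

section ApproxPairing

variable {ι 𝕜 E : Type*} [RCLike 𝕜] [NormedAddCommGroup E] [InnerProductSpace 𝕜 E]
  {l : Filter ι} {u v : ι → E}

def ApproxPairing (l : Filter ι) (u v : ι → E) (X : E →L[𝕜] E) (c : 𝕜) : Prop :=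
  Tendsto (fun i => ⟪X (v i), u i⟫_𝕜 - c * ⟪v i, u i⟫_𝕜) l (𝓝 0)

theorem approxPairing_one : ApproxPairing l u v (1 : E →L[𝕜] E) 1 := by
  simp [ApproxPairing, tendsto_const_nhds]

theorem ApproxPairing.smul {X : E →L[𝕜] E} {c : 𝕜} (h : ApproxPairing l u v X c) (r : 𝕜) :
    ApproxPairing l u v (r • X) (conj r * c) := by
  have key : ∀ i, ⟪(r • X) (v i), u i⟫_𝕜 - conj r * c * ⟪v i, u i⟫_𝕜
      = conj r * (⟪X (v i), u i⟫_𝕜 - c * ⟪v i, u i⟫_𝕜) := fun i => by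
    rw [smul_apply, inner_smul_left]
    ring
  simpa only [ApproxPairing, key, mul_zero] using h.const_mul (conj r)

theorem ApproxPairing.sum {κ : Type*} (s : Finset κ) {X : κ → E →L[𝕜] E} {c : κ → 𝕜}
    (h : ∀ j ∈ s, ApproxPairing l u v (X j) (c j)) :
    ApproxPairing l u v (∑ j ∈ s, X j) (∑ j ∈ s, c j) := by
  simpa only [ApproxPairing, _root_.sum_apply, sum_inner, sum_mul, ← sum_sub_distrib,
    sum_const_zero] using tendsto_finsetSum s h

theorem ApproxPairing.mul_right {X A : E →L[𝕜] E} {c a : 𝕜} (h : ApproxPairing l u v X c)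
    (hA : ApproxEigen l v A a) (hu : IsBoundedUnder (· ≤ ·) l (norm ∘ u)) :
    ApproxPairing l u v (X * A) (c * conj a) := by
  have hXA : Tendsto (fun i => ⟪X (A (v i) - a • v i), u i⟫_𝕜) l (𝓝 0) :=
    ((X.continuous.tendsto' 0 0 (map_zero X)).comp hA).op_zero_isBoundedUnder_le hu _
      norm_inner_le_norm
  have key : ∀ i, ⟪(X * A) (v i), u i⟫_𝕜 - c * conj a * ⟪v i, u i⟫_𝕜
      = ⟪X (A (v i) - a • v i), u i⟫_𝕜 + conj a * (⟪X (v i), u i⟫_𝕜 - c * ⟪v i, u i⟫_𝕜) :=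
    fun i => by
      rw [mul_apply_eq_comp, map_sub, map_smul, inner_sub_left, inner_smul_left]
      ring
  simpa only [ApproxPairing, key, mul_zero, add_zero] using hXA.add (h.const_mul (conj a))

theorem ApproxPairing.mul_left [CompleteSpace E] {X B : E →L[𝕜] E} {c b : 𝕜}
    (h : ApproxPairing l u v X c) (hB : ApproxEigen l u (star B) b)
    (hv : IsBoundedUnder (· ≤ ·) l (norm ∘ v)) :
    ApproxPairing l u v (B * X) (b * c) := by
  have hXB : Tendsto (fun i => ⟪X (v i), star B (u i) - b • u i⟫_𝕜) l (𝓝 0) := by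
    have hXv : IsBoundedUnder (· ≤ ·) l (norm ∘ fun i => X (v i)) := by
      obtain ⟨M, hM⟩ := hv
      exact ⟨‖X‖ * M, eventually_map.2 <| (eventually_map.1 hM).mono fun i hi =>
        (X.le_opNorm _).trans (mul_le_mul_of_nonneg_left hi (norm_nonneg X))⟩
    exact hB.op_zero_isBoundedUnder_le hXv (fun x y => ⟪y, x⟫_𝕜) fun x y => by
      rw [mul_comm]; exact norm_inner_le_norm y x
  have key : ∀ i, ⟪(B * X) (v i), u i⟫_𝕜 - b * c * ⟪v i, u i⟫_𝕜
      = ⟪X (v i), star B (u i) - b • u i⟫_𝕜 + b * (⟪X (v i), u i⟫_𝕜 - c * ⟪v i, u i⟫_𝕜) :=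
    fun i => by
      rw [mul_apply_eq_comp, star_eq_adjoint, ← adjoint_inner_right,
        inner_sub_right, inner_smul_right]
      ring
  simpa only [ApproxPairing, key, mul_zero, add_zero] using hXB.add (h.const_mul b)

theorem ApproxPairing.tendsto_inner_of_zero {c : 𝕜} (h : ApproxPairing l u v 0 c) (hc : c ≠ 0) :
    Tendsto (fun i => ⟪v i, u i⟫_𝕜) l (𝓝 0) := by
  simpa [ApproxPairing, hc] using h.neg.const_mul c⁻¹

end ApproxPairing

theorem sum_pow_eq_sum_antidiagonalTuple {R : Type*} [CommSemiring R] {d : ℕ} (x : Fin d → R)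
    (k : ℕ) : (∑ j, x j) ^ k =
      ∑ γ ∈ Finset.Nat.antidiagonalTuple d k, (Nat.multinomial univ γ : R) * ∏ j, x j ^ γ j := by
  rw [← piAntidiag_univ_fin_eq_antidiagonalTuple, sum_pow_eq_sum_piAntidiag]

section Isosymmetric

variable {ι : Type*} {l : Filter ι} {u v : ι → H} {d : ℕ}

theorem approxPairing_Mop (R : Fin d → H →L[ℂ] H) {μ μ' : Fin d → ℂ}
    (hu : IsBoundedUnder (· ≤ ·) l (norm ∘ u)) (hv : IsBoundedUnder (· ≤ ·) l (norm ∘ v))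
    (hμ : ∀ j, ApproxEigen l u (R j) (μ j)) (hμ' : ∀ j, ApproxEigen l v (R j) (μ' j)) (m : ℕ) :
    ApproxPairing l u v (Mop R m) ((∑ j, μ j * conj (μ' j) - 1) ^ m) := by
  have hγ : ∀ γ : Fin d → ℕ, ApproxPairing l u v
      (opPow (fun j => adjoint (R j)) γ * opPow R γ) (∏ j, (μ j * conj (μ' j)) ^ γ j) := by
    intro γ
    have := (approxPairing_one.mul_left (ApproxEigen.star_opPow_adjoint R hμ γ) hv).mul_right
      (ApproxEigen.opPow R hμ' γ) hu
    simpa [mul_pow, prod_mul_distrib, map_prod] using this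
  have hk : ∀ k, ApproxPairing l u v
      (∑ γ ∈ Finset.Nat.antidiagonalTuple d k, (Nat.multinomial univ γ : ℂ) •
        (opPow (fun j => adjoint (R j)) γ * opPow R γ)) ((∑ j, μ j * conj (μ' j)) ^ k) := by
    intro k
    rw [sum_pow_eq_sum_antidiagonalTuple]
    exact ApproxPairing.sum _ fun γ _ => by simpa using (hγ γ).smul (Nat.multinomial univ γ : ℂ)
  have := ApproxPairing.sum (range (m + 1)) fun k _ =>
    (hk k).smul ((-1 : ℂ) ^ (m - k) * (m.choose k : ℂ))
  rw [Mop]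
  convert this using 1
  rw [sub_eq_add_neg, add_pow]
  refine sum_congr rfl fun k _ => ?_
  simp
  ring

theorem approxPairing_Lam (R : Fin d → H →L[ℂ] H) {μ μ' : Fin d → ℂ}
    (hu : IsBoundedUnder (· ≤ ·) l (norm ∘ u)) (hv : IsBoundedUnder (· ≤ ·) l (norm ∘ v))
    (hμ : ∀ j, ApproxEigen l u (R j) (μ j)) (hμ' : ∀ j, ApproxEigen l v (R j) (μ' j))
    (m n : ℕ) :
    ApproxPairing l u v (Lam R m n)
      ((∑ j, (μ j - conj (μ' j))) ^ n * (∑ j, μ j * conj (μ' j) - 1) ^ m) := by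
  have hT : ApproxEigen l u (∑ j, R j) (∑ j, μ j) := ApproxEigen.sum _ fun j _ => hμ j
  have hT' : ApproxEigen l v (∑ j, R j) (∑ j, μ' j) := ApproxEigen.sum _ fun j _ => hμ' j
  have hstar : ∀ k, star ((∑ j, adjoint (R j)) ^ k) = (∑ j, R j) ^ k := fun k => by
    simp [star_pow, star_sum, star_eq_adjoint]
  have hk : ∀ k, ApproxPairing l u v ((∑ j, adjoint (R j)) ^ k * Mop R m * (∑ j, R j) ^ (n - k))
      ((∑ j, μ j) ^ k * (∑ j, μ j * conj (μ' j) - 1) ^ m * conj ((∑ j, μ' j) ^ (n - k))) :=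
    fun k => ((approxPairing_Mop R hu hv hμ hμ' m).mul_left (by rw [hstar]; exact hT.pow k)
      hv).mul_right (hT'.pow (n - k)) hu
  have := ApproxPairing.sum (range (n + 1)) fun k _ =>
    (hk k).smul ((-1 : ℂ) ^ (n - k) * (n.choose k : ℂ))
  rw [Lam]
  convert this using 1
  rw [sum_sub_distrib, ← map_sum, sub_eq_add_neg, add_pow, sum_mul]
  refine sum_congr rfl fun k _ => ?_
  rw [neg_pow, map_mul, map_pow, map_pow, map_neg, map_one, map_natCast]
  ring

end Isosymmetric

theorem approx_eigenvectors_asymptotically_orthogonal_general {d : ℕ}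
    (R : Fin d → H →L[ℂ] H)
    (m n : ℕ)
    (hiso : Lam R m n = 0) (μ μ' : Fin d → ℂ)
    (h1 : ∑ j, μ j * (starRingEnd ℂ) (μ' j) ≠ 1)
    (h2 : ∑ j, (μ j - (starRingEnd ℂ) (μ' j)) ≠ 0)
    (u v : ℕ → H) (hu : ∀ k, ‖u k‖ = 1) (hv : ∀ k, ‖v k‖ = 1)
    (hut : ∀ j, Filter.Tendsto (fun k => ‖R j (u k) - μ j • u k‖) Filter.atTop (nhds 0))
    (hvt : ∀ j, Filter.Tendsto (fun k => ‖R j (v k) - μ' j • v k‖) Filter.atTop (nhds 0)) :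
    Filter.Tendsto (fun k => (⟪u k, v k⟫_ℂ : ℂ)) Filter.atTop (nhds 0) := by
  have hLam := approxPairing_Lam R (isBoundedUnder_of ⟨1, fun k => (hu k).le⟩)
    (isBoundedUnder_of ⟨1, fun k => (hv k).le⟩)
    (fun j => tendsto_zero_iff_norm_tendsto_zero.2 (hut j))
    (fun j => tendsto_zero_iff_norm_tendsto_zero.2 (hvt j)) m n
  rw [hiso] at hLam
  have hvu := hLam.tendsto_inner_of_zero
    (mul_ne_zero (pow_ne_zero _ h2) (pow_ne_zero _ (sub_ne_zero.2 h1)))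
  simpa only [Function.comp_def, inner_conj_symm, map_zero]
    using (Complex.continuous_conj.tendsto 0).comp hvu

/-- asymptotic orthogonality of joint approximate eigenvectors of an
`(m,n)`-isosymmetric multioperator. -/
theorem approx_eigenvectors_asymptotically_orthogonal {d : ℕ}
    (R : Fin d → H →L[ℂ] H)
    (hcomm : ∀ i j, Commute (R i) (R j)) (m n : ℕ) (hm : 0 < m) (hn : 0 < n)
    (hiso : Lam R m n = 0) (μ μ' : Fin d → ℂ)
    (h1 : ∑ j, μ j * (starRingEnd ℂ) (μ' j) ≠ 1)
    (h2 : ∑ j, (μ j - (starRingEnd ℂ) (μ' j)) ≠ 0)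
    (u v : ℕ → H) (hu : ∀ k, ‖u k‖ = 1) (hv : ∀ k, ‖v k‖ = 1)
    (hut : ∀ j, Filter.Tendsto (fun k => ‖R j (u k) - μ j • u k‖) Filter.atTop (nhds 0))
    (hvt : ∀ j, Filter.Tendsto (fun k => ‖R j (v k) - μ' j • v k‖) Filter.atTop (nhds 0)) :
    Filter.Tendsto (fun k => (⟪u k, v k⟫_ℂ : ℂ)) Filter.atTop (nhds 0) :=
  approx_eigenvectors_asymptotically_orthogonal_general R m n hiso μ μ' h1 h2 u v hu hv hut hvt
end
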